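/- Consistency under a non-regression constraint: suppose sup_{f∈F}|L̂(f)−L(f)| ≤ B and sup_{f∈F}|L̂₀(f)−L₀(f)| ≤ B₀. Let f* minimize L over {f ∈ F : L₀(f) ≤ ε} and let f̂ minimize L̂ over {f ∈ F : L̂₀(f) ≤ ε + B₀} (both sets nonempty, f* assumed to exist). Then L(f̂) − L(f*) ≤ 2B and L₀(f̂) ≤ ε + 2B₀. -/
import Mathlib

theorem consistency_non_regression {α : Type*} (F : Set α)
    (Lhat L Lhat0 L0 : α → ℝ) (B B0 ε : ℝ)
    (hB : 0 ≤ B) (hB0 : 0 ≤ B0) (hε : 0 ≤ ε)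
    (hdev : ∀ f ∈ F, |Lhat f - L f| ≤ B)
    (hdev0 : ∀ f ∈ F, |Lhat0 f - L0 f| ≤ B0)
    (fstar : α) (hfstar : fstar ∈ {f ∈ F | L0 f ≤ ε})
    (hfstar_min : ∀ g ∈ {f ∈ F | L0 f ≤ ε}, L fstar ≤ L g)
    (fhat : α) (hfhat : fhat ∈ {f ∈ F | Lhat0 f ≤ ε + B0})
    (hfhat_min : ∀ g ∈ {f ∈ F | Lhat0 f ≤ ε + B0}, Lhat fhat ≤ Lhat g) :
    L fhat - L fstar ≤ 2 * B ∧ L0 fhat ≤ ε + 2 * B0 := by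
  obtain ⟨hsF, hsL0⟩ := hfstar
  obtain ⟨hhF, hhL0⟩ := hfhat
  have h1 := abs_le.mp (hdev fhat hhF)
  have h2 := abs_le.mp (hdev fstar hsF)
  have h3 := abs_le.mp (hdev0 fhat hhF)
  have h4 := abs_le.mp (hdev0 fstar hsF)
  have hstar_in : fstar ∈ {f ∈ F | Lhat0 f ≤ ε + B0} := ⟨hsF, by linarith [h4.1]⟩
  have := hfhat_min fstar hstar_in
  constructor
  · linarith [h1.1, h2.2]
  · linarith [h3.1]
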